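/- arXiv:2311.15466 — 5 statements merged into one kernel-verified Lean document; each statement's English description precedes it below -/
import Mathlib

section
/- For the directed graph on Z^2 with edges from (x,y) to (x+1,y), (x,y+1), and (x-1,y-1), where traversing an edge forwards costs 1/3 and backwards costs 2/3, the minimal cost of a path from the origin to a point (x,y) equals max{x+y, y-2x, x-2y}/3. -/
/-- The forward steps of the directed graph `Γ` on `ℤ × ℤ`:
from `(x,y)` there are edges to `(x+1,y)`, `(x,y+1)`, `(x-1,y-1)`. -/
def fwdSteps : List (ℤ × ℤ) := [(1, 0), (0, 1), (-1, -1)]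

/-- A step of a path: an edge traversed either forwards or backwards. -/
def IsStep (s : ℤ × ℤ) : Prop := s ∈ fwdSteps ∨ -s ∈ fwdSteps

/-- The cost of a step: `1/3` forwards, `2/3` backwards. -/
noncomputable def stepCost (s : ℤ × ℤ) : ℝ :=
  if s ∈ fwdSteps then 1/3 else 2/3

/-- The length of a path, given as its list of steps. -/
noncomputable def pathLen (l : List (ℤ × ℤ)) : ℝ := (l.map stepCost).sum

/-- The set of lengths of paths from `a` to `b` in `Γ`. -/
def pathLengths (a b : ℤ × ℤ) : Set ℝ :=
  {c | ∃ l : List (ℤ × ℤ), (∀ s ∈ l, IsStep s) ∧ a + l.sum = b ∧ pathLen l = c}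

/-- The asymmetric distance on `Γ`: the infimum (in fact minimum) of path lengths. -/
noncomputable def latticeDist (a b : ℤ × ℤ) : ℝ := sInf (pathLengths a b)

/-!
Each of the linear forms `x + y`, `y - 2x`, `x - 2y` takes the values `1, 1, -2` (in some order)
on the three forward steps, hence is at most `3 ⋅ stepCost` on every step, forwards or backwards.
Summing along a path, their maximum at the endpoint is at most three times the length of any path.
Conversely, with `c = max (0, -x, -y)`, the path made of `x + c` steps `(1,0)`, `y + c` steps `(0,1)`
and `c` steps `(-1,-1)` uses only forward steps and has `x + y + 3c = max (x+y, y-2x, x-2y)` of them.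
-/

def linForm (p q : ℤ) : ℤ × ℤ →+ ℤ := p • AddMonoidHom.fst ℤ ℤ + q • AddMonoidHom.snd ℤ ℤ

@[simp]
lemma linForm_apply (p q : ℤ) (v : ℤ × ℤ) : linForm p q v = p * v.1 + q * v.2 := by
  simp [linForm]

def distBound (v : ℤ × ℤ) : ℤ := max (v.1 + v.2) (max (v.2 - 2 * v.1) (v.1 - 2 * v.2))

lemma distBound_eq_max_linForm (v : ℤ × ℤ) :
    distBound v = max (linForm 1 1 v) (max (linForm (-2) 1 v) (linForm 1 (-2) v)) := by
  simp only [distBound, linForm_apply]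
  congr 1 <;> [ring; congr 1 <;> ring]

lemma isStep_iff (s : ℤ × ℤ) :
    IsStep s ↔ s ∈ ([(1, 0), (0, 1), (-1, -1), (-1, 0), (0, -1), (1, 1)] : List (ℤ × ℤ)) := by
  obtain ⟨a, b⟩ := s
  simp only [IsStep, fwdSteps, List.mem_cons, List.not_mem_nil, or_false, Prod.neg_mk,
    Prod.mk.injEq]
  omega

lemma linForm_le_stepCost {p q : ℤ} (hpq : (p, q) ∈ ([(1, 1), (-2, 1), (1, -2)] : List (ℤ × ℤ)))
    {s : ℤ × ℤ} (hs : IsStep s) : (linForm p q s : ℝ) ≤ 3 * stepCost s := by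
  rw [isStep_iff] at hs
  simp only [List.mem_cons, List.not_mem_nil, or_false, Prod.mk.injEq] at hpq hs
  rcases hs with rfl | rfl | rfl | rfl | rfl | rfl <;>
    rcases hpq with ⟨rfl, rfl⟩ | ⟨rfl, rfl⟩ | ⟨rfl, rfl⟩ <;>
    norm_num [stepCost, fwdSteps]

lemma addMonoidHom_sum_le_pathLen (φ : ℤ × ℤ →+ ℤ)
    (hφ : ∀ s, IsStep s → (φ s : ℝ) ≤ 3 * stepCost s)
    {l : List (ℤ × ℤ)} (hl : ∀ s ∈ l, IsStep s) : (φ l.sum : ℝ) ≤ 3 * pathLen l := by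
  rw [map_list_sum, Int.cast_list_sum, pathLen, ← List.sum_map_mul_left, List.map_map]
  exact List.sum_le_sum fun s hs => hφ s (hl s hs)

lemma distBound_sum_le_pathLen {l : List (ℤ × ℤ)} (hl : ∀ s ∈ l, IsStep s) :
    (distBound l.sum : ℝ) ≤ 3 * pathLen l := by
  have key {p q : ℤ} (hpq : (p, q) ∈ ([(1, 1), (-2, 1), (1, -2)] : List (ℤ × ℤ))) :=
    addMonoidHom_sum_le_pathLen (linForm p q) (fun _ => linForm_le_stepCost hpq) hl
  rw [distBound_eq_max_linForm]
  push_cast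
  exact max_le (key (by simp)) (max_le (key (by simp)) (key (by simp)))

lemma pathLen_of_forall_mem_fwdSteps {l : List (ℤ × ℤ)} (hl : ∀ s ∈ l, s ∈ fwdSteps) :
    pathLen l = l.length / 3 := by
  have hcost : ∀ s ∈ l, stepCost s = 1 / 3 := fun s hs => if_pos (hl s hs)
  rw [pathLen, List.map_congr_left hcost, List.map_const',
    List.sum_replicate, nsmul_eq_mul]
  ring

lemma exists_fwd_path_length_eq_distBound (v : ℤ × ℤ) :
    ∃ l : List (ℤ × ℤ), (∀ s ∈ l, s ∈ fwdSteps) ∧ l.sum = v ∧ (l.length : ℤ) = distBound v := by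
  obtain ⟨x, y⟩ := v
  set c : ℕ := (max 0 (max (-x) (-y))).toNat
  refine ⟨List.replicate (x + c).toNat (1, 0) ++ List.replicate (y + c).toNat (0, 1) ++
    List.replicate c (-1, -1), ?_, ?_, ?_⟩
  · simp only [List.mem_append, List.mem_replicate]
    rintro s ((⟨-, rfl⟩ | ⟨-, rfl⟩) | ⟨-, rfl⟩) <;> simp [fwdSteps]
  · simp only [List.sum_append, List.sum_replicate, Prod.smul_mk, nsmul_eq_mul, mul_one, mul_zero, mul_neg, Prod.mk_add_mk,
      Prod.mk.injEq]
    omega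
  · simp only [List.length_append, List.length_replicate, distBound]
    omega

lemma isLeast_pathLengths_zero (v : ℤ × ℤ) :
    IsLeast (pathLengths 0 v) ((distBound v : ℝ) / 3) := by
  constructor
  · obtain ⟨l, hfwd, hsum, hlen⟩ := exists_fwd_path_length_eq_distBound v
    refine ⟨l, fun s hs => Or.inl (hfwd s hs), by rw [zero_add, hsum], ?_⟩
    rw [pathLen_of_forall_mem_fwdSteps hfwd, ← hlen, Int.cast_natCast]
  · rintro _ ⟨l, hl, hsum, rfl⟩
    rw [zero_add] at hsum
    have := distBound_sum_le_pathLen hl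
    rw [hsum] at this
    linarith

/-- the minimal cost of a path from the origin to `(x,y)` equals
`max {x+y, y-2x, x-2y} / 3`, and this infimum is attained. -/
theorem lattice_dist_formula (x y : ℤ) :
    latticeDist (0, 0) (x, y) =
      ((max (x + y) (max (y - 2 * x) (x - 2 * y)) : ℤ) : ℝ) / 3 ∧
    latticeDist (0, 0) (x, y) ∈ pathLengths (0, 0) (x, y) := by
  have h := isLeast_pathLengths_zero (x, y)
  rw [latticeDist, ← Prod.zero_eq_mk, h.csInf_eq]
  exact ⟨rfl, h.1⟩
end

section
/- In the directed lattice graph Γ with asymmetric costs, for A = (0,p) and B = (q,0) with p ≥ 0 and q ≥ 0, the distance from A to B equals (q + 2p)/3, and the path going vertically down from A to the origin and then horizontally to B achieves this minimum. -/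
/-- Linear lower bound functional. -/
noncomputable def phi (s : ℤ × ℤ) : ℝ := ((s.1 : ℝ) - 2 * (s.2 : ℝ)) / 3

lemma phi_sum (l : List (ℤ × ℤ)) : phi l.sum = (l.map phi).sum := by
  induction l with
  | nil => simp [phi]
  | cons a t ih =>
      simp only [List.sum_cons, List.map_cons]
      rw [← ih]
      simp [phi, Prod.fst_add, Prod.snd_add]
      ring

lemma phi_le_stepCost (s : ℤ × ℤ) (h : IsStep s) : phi s ≤ stepCost s := by
  rcases h with h | h <;> simp [fwdSteps] at h
  · rcases h with h | h | h <;> subst h <;> norm_num [phi, stepCost, fwdSteps]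
  · have : s = (-1, 0) ∨ s = (0, -1) ∨ s = (1, 1) := by
      rcases h with h | h | h
      · left; have := congrArg Neg.neg h; simpa using this
      · right; left; have := congrArg Neg.neg h; simpa using this
      · right; right; have := congrArg Neg.neg h; simpa using this
    rcases this with h | h | h <;> subst h <;>
      simp [phi, stepCost, fwdSteps, Prod.ext_iff] <;> norm_num

/-- for `A = (0,p)`, `B = (q,0)` with `p, q ≥ 0`, the distance from `A` to `B`
equals `(q + 2p)/3`, and the path going vertically down from `A` to the origin and then
horizontally to `B` achieves this minimum. -/
theorem lattice_dist_axis (p q : ℕ) :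
    latticeDist ((0 : ℤ), (p : ℤ)) ((q : ℤ), (0 : ℤ)) = ((q : ℝ) + 2 * p) / 3 ∧
    pathLen (List.replicate p ((0 : ℤ), (-1 : ℤ)) ++ List.replicate q ((1 : ℤ), (0 : ℤ))) =
      latticeDist ((0 : ℤ), (p : ℤ)) ((q : ℤ), (0 : ℤ)) := by
  have hlen : pathLen (List.replicate p ((0 : ℤ), (-1 : ℤ)) ++
      List.replicate q ((1 : ℤ), (0 : ℤ))) = ((q : ℝ) + 2 * p) / 3 := by
    simp [pathLen, stepCost, fwdSteps, List.map_replicate]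
    ring
  have hmem : (((q : ℝ) + 2 * p) / 3) ∈
      pathLengths ((0 : ℤ), (p : ℤ)) ((q : ℤ), (0 : ℤ)) := by
    refine ⟨List.replicate p ((0 : ℤ), (-1 : ℤ)) ++ List.replicate q ((1 : ℤ), (0 : ℤ)),
      ?_, ?_, hlen⟩
    · intro s hs
      simp [List.mem_append, List.mem_replicate] at hs
      rcases hs with ⟨_, rfl⟩ | ⟨_, rfl⟩
      · right; simp [fwdSteps]
      · left; simp [fwdSteps]
    · simp [List.sum_replicate, Prod.ext_iff]
  have hlb : ∀ c ∈ pathLengths ((0 : ℤ), (p : ℤ)) ((q : ℤ), (0 : ℤ)),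
      ((q : ℝ) + 2 * p) / 3 ≤ c := by
    rintro c ⟨l, hstep, hsum, rfl⟩
    have h1 : phi l.sum ≤ pathLen l := by
      rw [phi_sum]
      exact List.sum_le_sum (by intro s hs; exact phi_le_stepCost s (hstep s (by simpa using hs)))
    have h2 : l.sum = (((q : ℤ), (0 : ℤ)) - ((0 : ℤ), (p : ℤ))) :=
      eq_sub_of_add_eq' hsum
    have h3 : phi l.sum = ((q : ℝ) + 2 * p) / 3 := by
      rw [h2]
      simp [phi, Prod.fst_sub, Prod.snd_sub]
    rw [← h3]
    exact h1
  have hne : (pathLengths ((0 : ℤ), (p : ℤ)) ((q : ℤ), (0 : ℤ))).Nonempty := ⟨_, hmem⟩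
  have hbdd : BddBelow (pathLengths ((0 : ℤ), (p : ℤ)) ((q : ℤ), (0 : ℤ))) :=
    ⟨_, fun c hc => hlb c hc⟩
  have hdist : latticeDist ((0 : ℤ), (p : ℤ)) ((q : ℤ), (0 : ℤ)) = ((q : ℝ) + 2 * p) / 3 :=
    le_antisymm (csInf_le hbdd hmem) (le_csInf hne hlb)
  exact ⟨hdist, by rw [hdist, hlen]⟩
end

section
/- Define a hive on the triangle as a 7-tuple (a1,...,a7) of rational numbers such that the nine quantities a1+a2-a4, a3+a4-a1-a6, a4+a5-a2-a7, a5+a7-a4, a2+a4-a1-a5, a4+a6-a3-a7, a3+a6-a4, a4+a7-a5-a6, a1+a4-a2-a3 are all nonnegative integers. Then the map sending (x,y,z,t,u,v,w) ∈ Z × N^6 to the 7-tuple given by a1 = (2t+u+2w+v+max{2x,-x})/3, a2 = (2w+v+2z+y+max{x,-2x})/3, a3 = (2v+w+2u+t+max{x,-2x})/3, a4 = (2v+w+2t+u+2z+y+max{3x,-3x})/3, a5 = (2v+w+2y+z+max{2x,-x})/3, a6 = (2z+y+2u+t+max{2x,-x})/3, a7 = (2t+u+2y+z+max{x,-2x})/3,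 is a bijection from Z × N^6 onto the set of hives. -/
/-- A rational number is a nonnegative integer. -/
def IsNonnegInt (q : ℚ) : Prop := ∃ n : ℕ, q = n

/-- The set of SL₃-hives on a triangle: 7-tuples `(a₁,…,a₇)` (indexed here by `Fin 7`,
with `a i` denoting `a_{i+1}`) satisfying the nine rhombus conditions. -/
def IsHive (a : Fin 7 → ℚ) : Prop :=
  IsNonnegInt (a 0 + a 1 - a 3) ∧
  IsNonnegInt (a 2 + a 3 - a 0 - a 5) ∧
  IsNonnegInt (a 3 + a 4 - a 1 - a 6) ∧
  IsNonnegInt (a 4 + a 6 - a 3) ∧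
  IsNonnegInt (a 1 + a 3 - a 0 - a 4) ∧
  IsNonnegInt (a 3 + a 5 - a 2 - a 6) ∧
  IsNonnegInt (a 2 + a 5 - a 3) ∧
  IsNonnegInt (a 3 + a 6 - a 4 - a 5) ∧
  IsNonnegInt (a 0 + a 3 - a 1 - a 2)

/-- The explicit map from web parameters `(x,y,z,t,u,v,w) ∈ ℤ × ℕ⁶` to 7-tuples. -/
def hiveOf (x : ℤ) (y z t u v w : ℕ) : Fin 7 → ℚ :=
  ![(2 * (t : ℚ) + u + 2 * w + v + max (2 * (x : ℚ)) (-(x : ℚ))) / 3,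
    (2 * (w : ℚ) + v + 2 * z + y + max ((x : ℚ)) (-(2 * (x : ℚ)))) / 3,
    (2 * (v : ℚ) + w + 2 * u + t + max ((x : ℚ)) (-(2 * (x : ℚ)))) / 3,
    (2 * (v : ℚ) + w + 2 * t + u + 2 * z + y + max (3 * (x : ℚ)) (-(3 * (x : ℚ)))) / 3,
    (2 * (v : ℚ) + w + 2 * y + z + max (2 * (x : ℚ)) (-(x : ℚ))) / 3,
    (2 * (z : ℚ) + y + 2 * u + t + max (2 * (x : ℚ)) (-(x : ℚ))) / 3,
    (2 * (t : ℚ) + u + 2 * y + z + max ((x : ℚ)) (-(2 * (x : ℚ)))) / 3]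

lemma consVal5 {α : Type*} (a b c d e f g : α) : ![a,b,c,d,e,f,g] 5 = f := rfl
lemma consVal6 {α : Type*} (a b c d e f g : α) : ![a,b,c,d,e,f,g] 6 = g := rfl

/-- The nine rhombus quantities of `hiveOf x y z t u v w`. -/
lemma hive_key (x : ℤ) (y z t u v w : ℕ) :
    hiveOf x y z t u v w 0 + hiveOf x y z t u v w 1 - hiveOf x y z t u v w 3 = w ∧
    hiveOf x y z t u v w 2 + hiveOf x y z t u v w 3 - hiveOf x y z t u v w 0
      - hiveOf x y z t u v w 5 = v + max (-(x:ℚ)) 0 ∧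
    hiveOf x y z t u v w 3 + hiveOf x y z t u v w 4 - hiveOf x y z t u v w 1
      - hiveOf x y z t u v w 6 = v + max ((x:ℚ)) 0 ∧
    hiveOf x y z t u v w 4 + hiveOf x y z t u v w 6 - hiveOf x y z t u v w 3 = y ∧
    hiveOf x y z t u v w 1 + hiveOf x y z t u v w 3 - hiveOf x y z t u v w 0
      - hiveOf x y z t u v w 4 = z + max (-(x:ℚ)) 0 ∧
    hiveOf x y z t u v w 3 + hiveOf x y z t u v w 5 - hiveOf x y z t u v w 2
      - hiveOf x y z t u v w 6 = z + max ((x:ℚ)) 0 ∧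
    hiveOf x y z t u v w 2 + hiveOf x y z t u v w 5 - hiveOf x y z t u v w 3 = u ∧
    hiveOf x y z t u v w 3 + hiveOf x y z t u v w 6 - hiveOf x y z t u v w 4
      - hiveOf x y z t u v w 5 = t + max (-(x:ℚ)) 0 ∧
    hiveOf x y z t u v w 0 + hiveOf x y z t u v w 3 - hiveOf x y z t u v w 1
      - hiveOf x y z t u v w 2 = t + max ((x:ℚ)) 0 := by
  simp only [hiveOf, Matrix.cons_val_zero, Matrix.cons_val_one, Matrix.head_cons,
    Matrix.cons_val_two, Matrix.tail_cons, Matrix.cons_val_three, Matrix.cons_val_four,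
    consVal5, consVal6]
  rcases le_total ((x:ℚ)) 0 with hx | hx
  · rw [max_eq_right (by linarith : (2*(x:ℚ)) ≤ -(x:ℚ)),
      max_eq_right (by linarith : ((x:ℚ)) ≤ -(2*(x:ℚ))),
      max_eq_right (by linarith : (3*(x:ℚ)) ≤ -(3*(x:ℚ))),
      max_eq_left (by linarith : (0:ℚ) ≤ -(x:ℚ)),
      max_eq_right hx]
    refine ⟨by ring, by ring, by ring, by ring, by ring, by ring, by ring, by ring, by ring⟩
  · rw [max_eq_left (by linarith : (-(x:ℚ)) ≤ 2*(x:ℚ)),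
      max_eq_left (by linarith : (-(2*(x:ℚ))) ≤ (x:ℚ)),
      max_eq_left (by linarith : (-(3*(x:ℚ))) ≤ 3*(x:ℚ)),
      max_eq_right (by linarith : (-(x:ℚ)) ≤ 0),
      max_eq_left hx]
    refine ⟨by ring, by ring, by ring, by ring, by ring, by ring, by ring, by ring, by ring⟩

/-- the map `(x,y,z,t,u,v,w) ↦ (a₁,…,a₇)` is a bijection from
`ℤ × ℕ⁶` onto the set of hives. -/
theorem hiveOf_bijective :
    Function.Injective
      (fun p : ℤ × ℕ × ℕ × ℕ × ℕ × ℕ × ℕ =>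
        hiveOf p.1 p.2.1 p.2.2.1 p.2.2.2.1 p.2.2.2.2.1 p.2.2.2.2.2.1 p.2.2.2.2.2.2) ∧
    Set.range
      (fun p : ℤ × ℕ × ℕ × ℕ × ℕ × ℕ × ℕ =>
        hiveOf p.1 p.2.1 p.2.2.1 p.2.2.2.1 p.2.2.2.2.1 p.2.2.2.2.2.1 p.2.2.2.2.2.2) =
      {a | IsHive a} := by
  constructor
  · rintro ⟨x, y, z, t, u, v, w⟩ ⟨x', y', z', t', u', v', w'⟩ h
    simp only at h
    obtain ⟨k1, k2, k3, k4, k5, k6, k7, k8, k9⟩ := hive_key x y z t u v w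
    obtain ⟨k1', k2', k3', k4', k5', k6', k7', k8', k9'⟩ := hive_key x' y' z' t' u' v' w'
    rw [h] at k1 k2 k3 k4 k5 k6 k7 k8 k9
    have hw : (w : ℚ) = w' := k1.symm.trans k1'
    have hy : (y : ℚ) = y' := k4.symm.trans k4'
    have hu : (u : ℚ) = u' := k7.symm.trans k7'
    have e2 : (v : ℚ) + max (-(x:ℚ)) 0 = v' + max (-(x':ℚ)) 0 := k2.symm.trans k2'
    have e3 : (v : ℚ) + max ((x:ℚ)) 0 = v' + max ((x':ℚ)) 0 := k3.symm.trans k3'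
    have e5 : (z : ℚ) + max (-(x:ℚ)) 0 = z' + max (-(x':ℚ)) 0 := k5.symm.trans k5'
    have e8 : (t : ℚ) + max (-(x:ℚ)) 0 = t' + max (-(x':ℚ)) 0 := k8.symm.trans k8'
    have m : max ((x:ℚ)) 0 - max (-(x:ℚ)) 0 = (x:ℚ) := max_zero_sub_max_neg_zero_eq_self _
    have m' : max ((x':ℚ)) 0 - max (-(x':ℚ)) 0 = (x':ℚ) := max_zero_sub_max_neg_zero_eq_self _
    have hx : (x : ℚ) = x' := by linarith
    have hx' : x = x' := by exact_mod_cast hx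
    have hmax : max (-(x:ℚ)) 0 = max (-(x':ℚ)) 0 := by rw [hx]
    have hv : (v : ℚ) = v' := by linarith
    have hz : (z : ℚ) = z' := by linarith
    have ht : (t : ℚ) = t' := by linarith
    ext <;> first
      | exact hx'
      | exact_mod_cast hy
      | exact_mod_cast hz
      | exact_mod_cast ht
      | exact_mod_cast hu
      | exact_mod_cast hv
      | exact_mod_cast hw
  · ext a
    simp only [Set.mem_range, Set.mem_setOf_eq]
    constructor
    · rintro ⟨⟨x, y, z, t, u, v, w⟩, rfl⟩
      simp only at *
      obtain ⟨k1, k2, k3, k4, k5, k6, k7, k8, k9⟩ := hive_key x y z t u v w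
      rcases le_total x 0 with hx | hx
      · have hxq : (x : ℚ) ≤ 0 := by exact_mod_cast hx
        have hm1 : max (-(x:ℚ)) 0 = ((-x).toNat : ℚ) := by
          have hcc : ((-x).toNat : ℚ) = -(x:ℚ) := by
            exact_mod_cast Int.toNat_of_nonneg (by linarith : (0:ℤ) ≤ -x)
          rw [max_eq_left (by linarith), hcc]
        have hm2 : max ((x:ℚ)) 0 = ((0:ℕ) : ℚ) := by
          rw [max_eq_right hxq]; norm_num
        exact ⟨⟨w, k1⟩, ⟨v + (-x).toNat, by rw [k2, hm1]; push_cast; ring⟩,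
          ⟨v + 0, by rw [k3, hm2]; push_cast; ring⟩, ⟨y, k4⟩,
          ⟨z + (-x).toNat, by rw [k5, hm1]; push_cast; ring⟩,
          ⟨z + 0, by rw [k6, hm2]; push_cast; ring⟩, ⟨u, k7⟩,
          ⟨t + (-x).toNat, by rw [k8, hm1]; push_cast; ring⟩,
          ⟨t + 0, by rw [k9, hm2]; push_cast; ring⟩⟩
      · have hxq : (0:ℚ) ≤ (x : ℚ) := by exact_mod_cast hx
        have hm1 : max (-(x:ℚ)) 0 = ((0:ℕ) : ℚ) := by
          rw [max_eq_right (by linarith)]; norm_num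
        have hm2 : max ((x:ℚ)) 0 = (x.toNat : ℚ) := by
          have hcc : (x.toNat : ℚ) = (x:ℚ) := by
            exact_mod_cast Int.toNat_of_nonneg hx
          rw [max_eq_left hxq, hcc]
        exact ⟨⟨w, k1⟩, ⟨v + 0, by rw [k2, hm1]; push_cast; ring⟩,
          ⟨v + x.toNat, by rw [k3, hm2]; push_cast; ring⟩, ⟨y, k4⟩,
          ⟨z + 0, by rw [k5, hm1]; push_cast; ring⟩,
          ⟨z + x.toNat, by rw [k6, hm2]; push_cast; ring⟩, ⟨u, k7⟩,
          ⟨t + 0, by rw [k8, hm1]; push_cast; ring⟩,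
          ⟨t + x.toNat, by rw [k9, hm2]; push_cast; ring⟩⟩
    · rintro ⟨⟨n1, e1⟩, ⟨n2, e2⟩, ⟨n3, e3⟩, ⟨n4, e4⟩, ⟨n5, e5⟩, ⟨n6, e6⟩, ⟨n7, e7⟩,
        ⟨n8, e8⟩, ⟨n9, e9⟩⟩
      refine ⟨⟨(n3 : ℤ) - n2, n4, min n5 n6, min n8 n9, n7, min n2 n3, n1⟩, ?_⟩
      simp only
      have c1 : (n3 : ℚ) - n2 = (n6 : ℚ) - n5 := by linarith
      have c2 : (n3 : ℚ) - n2 = (n9 : ℚ) - n8 := by linarith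
      have hxcast : (((n3 : ℤ) - n2 : ℤ) : ℚ) = (n3 : ℚ) - n2 := by push_cast; ring
      rcases le_total n2 n3 with hc | hc
      · have hq : (n2 : ℚ) ≤ n3 := by exact_mod_cast hc
        have h56 : n5 ≤ n6 := by
          have : (n5 : ℚ) ≤ n6 := by linarith
          exact_mod_cast this
        have h89 : n8 ≤ n9 := by
          have : (n8 : ℚ) ≤ n9 := by linarith
          exact_mod_cast this
        have hmin23 : min n2 n3 = n2 := min_eq_left hc
        have hmin56 : min n5 n6 = n5 := min_eq_left h56
        have hmin89 : min n8 n9 = n8 := min_eq_left h89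
        have hM1 : max (2 * (((n3 : ℤ) - n2 : ℤ) : ℚ)) (-(((n3 : ℤ) - n2 : ℤ) : ℚ))
            = 2 * ((n3 : ℚ) - n2) := by
          rw [hxcast]; exact max_eq_left (by linarith)
        have hM2 : max ((((n3 : ℤ) - n2 : ℤ) : ℚ)) (-(2 * (((n3 : ℤ) - n2 : ℤ) : ℚ)))
            = (n3 : ℚ) - n2 := by
          rw [hxcast]; exact max_eq_left (by linarith)
        have hM3 : max (3 * (((n3 : ℤ) - n2 : ℤ) : ℚ)) (-(3 * (((n3 : ℤ) - n2 : ℤ) : ℚ)))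
            = 3 * ((n3 : ℚ) - n2) := by
          rw [hxcast]; exact max_eq_left (by linarith)
        funext i
        fin_cases i <;>
          simp only [hiveOf, hmin23, hmin56, hmin89, hM1, hM2, hM3,
            Matrix.cons_val_zero, Matrix.cons_val_one, Matrix.head_cons,
            Matrix.cons_val_two, Matrix.tail_cons, Matrix.cons_val_three,
            Matrix.cons_val_four, consVal5, consVal6, Fin.isValue, Fin.reduceFinMk,
            Fin.zero_eta, Fin.mk_one] <;>
          rw [div_eq_iff (by norm_num : (3:ℚ) ≠ 0)] <;> linarith
      · have hq : (n3 : ℚ) ≤ n2 := by exact_mod_cast hc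
        have h56 : n6 ≤ n5 := by
          have : (n6 : ℚ) ≤ n5 := by linarith
          exact_mod_cast this
        have h89 : n9 ≤ n8 := by
          have : (n9 : ℚ) ≤ n8 := by linarith
          exact_mod_cast this
        have hmin23 : min n2 n3 = n3 := min_eq_right hc
        have hmin56 : min n5 n6 = n6 := min_eq_right h56
        have hmin89 : min n8 n9 = n9 := min_eq_right h89
        have hM1 : max (2 * (((n3 : ℤ) - n2 : ℤ) : ℚ)) (-(((n3 : ℤ) - n2 : ℤ) : ℚ))
            = -((n3 : ℚ) - n2) := by
          rw [hxcast]; exact max_eq_right (by linarith)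
        have hM2 : max ((((n3 : ℤ) - n2 : ℤ) : ℚ)) (-(2 * (((n3 : ℤ) - n2 : ℤ) : ℚ)))
            = -(2 * ((n3 : ℚ) - n2)) := by
          rw [hxcast]; exact max_eq_right (by linarith)
        have hM3 : max (3 * (((n3 : ℤ) - n2 : ℤ) : ℚ)) (-(3 * (((n3 : ℤ) - n2 : ℤ) : ℚ)))
            = -(3 * ((n3 : ℚ) - n2)) := by
          rw [hxcast]; exact max_eq_right (by linarith)
        funext i
        fin_cases i <;>
          simp only [hiveOf, hmin23, hmin56, hmin89, hM1, hM2, hM3,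
            Matrix.cons_val_zero, Matrix.cons_val_one, Matrix.head_cons,
            Matrix.cons_val_two, Matrix.tail_cons, Matrix.cons_val_three,
            Matrix.cons_val_four, consVal5, consVal6, Fin.isValue, Fin.reduceFinMk,
            Fin.zero_eta, Fin.mk_one] <;>
          rw [div_eq_iff (by norm_num : (3:ℚ) ≠ 0)] <;> linarith
end

section
/- Let A1 = (0,a), A2 = (b,0), A3 = (0,c) be points of Z^2 with b ≥ 0 and c ≥ a ≥ 0. Then there exists a point Y on the union of the two positive axes {(s,0): s ≥ 0} ∪ {(0,s): s ≥ 0} such that d(A1,Y) + d(A2,Y) + d(A3,Y) = min over all X ∈ Z^2 of d(A1,X) + d(A2,X) + d(A3,X), where d is the asymmetric lattice distance on Γ. -/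
/-!
Take `Y = A₁ = (0, a)`. Each of the linear maps `(x, y) ↦ (x + y)/3, (y - 2x)/3, (x - 2y)/3`
is at most the cost of every step, so it bounds `d(P, Q)` below by its value at `Q - P`.
Using the first for `d(A₁, X)`, the second for `d(A₂, X)` and the third for `d(A₃, X)`, the
terms in `X` cancel and the sum is at least `(2b + 2c - a)/3` for every `X`. Paths of forward
steps attain this bound at `Y`: `b` steps `(-1,-1)` and `a + b` steps `(0,1)` from `A₂`, and
`c - a` steps each of `(1,0)` and `(-1,-1)` from `A₃`.
-/

lemma forall_isStep {P : ℤ × ℤ → Prop} :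
    (∀ s, IsStep s → P s) ↔
      P (1, 0) ∧ P (0, 1) ∧ P (-1, -1) ∧ P (-1, 0) ∧ P (0, -1) ∧ P (1, 1) := by
  constructor
  · intro h
    refine ⟨h _ ?_, h _ ?_, h _ ?_, h _ ?_, h _ ?_, h _ ?_⟩ <;> unfold IsStep <;> decide
  · rintro ⟨h₁, h₂, h₃, h₄, h₅, h₆⟩ s (hs | hs)
    · simp only [fwdSteps, List.mem_cons, List.not_mem_nil, or_false] at hs
      rcases hs with rfl | rfl | rfl <;> assumption
    · simp only [fwdSteps, List.mem_cons, List.not_mem_nil, or_false, neg_eq_iff_eq_neg] at hs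
      rcases hs with rfl | rfl | rfl <;> assumption

lemma stepCost_nonneg (s : ℤ × ℤ) : 0 ≤ stepCost s := by
  unfold stepCost; split <;> norm_num

lemma pathLen_nonneg (l : List (ℤ × ℤ)) : 0 ≤ pathLen l :=
  List.sum_nonneg (by simp only [List.mem_map]; rintro _ ⟨s, -, rfl⟩; exact stepCost_nonneg s)

lemma pathLengths_nonempty (p q : ℤ × ℤ) : (pathLengths p q).Nonempty := by
  refine ⟨_, List.replicate (q.1 - p.1).toNat (1, 0) ++ List.replicate (p.1 - q.1).toNat (-1, 0)
    ++ List.replicate (q.2 - p.2).toNat (0, 1) ++ List.replicate (p.2 - q.2).toNat (0, -1),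
    ?_, ?_, rfl⟩
  · simp only [List.mem_append, List.mem_replicate]
    rintro s (((⟨-, rfl⟩ | ⟨-, rfl⟩) | ⟨-, rfl⟩) | ⟨-, rfl⟩)
    exacts [Or.inl (by decide), Or.inr (by decide), Or.inl (by decide), Or.inr (by decide)]
  · ext <;> simp <;> omega

lemma latticeDist_le_pathLen {p q : ℤ × ℤ} {l : List (ℤ × ℤ)} (hl : ∀ s ∈ l, IsStep s)
    (hpq : p + l.sum = q) : latticeDist p q ≤ pathLen l :=
  csInf_le ⟨0, by rintro _ ⟨l, -, -, rfl⟩; exact pathLen_nonneg l⟩ ⟨l, hl, hpq, rfl⟩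

lemma latticeDist_self (p : ℤ × ℤ) : latticeDist p p = 0 :=
  le_antisymm (by simpa [pathLen] using latticeDist_le_pathLen (l := []) (by simp) (add_zero p))
    (le_csInf (pathLengths_nonempty p p) (by rintro _ ⟨l, -, -, rfl⟩; exact pathLen_nonneg l))

lemma latticeDist_le_of_fwdSteps {p q s t : ℤ × ℤ} (hs : s ∈ fwdSteps) (ht : t ∈ fwdSteps)
    (m n : ℕ) (hpq : p + (m • s + n • t) = q) : latticeDist p q ≤ (m + n) / 3 := by
  refine (latticeDist_le_pathLen (l := List.replicate m s ++ List.replicate n t) ?_ ?_).trans_eq ?_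
  · simp only [List.mem_append, List.mem_replicate]
    rintro _ (⟨-, rfl⟩ | ⟨-, rfl⟩)
    exacts [Or.inl hs, Or.inl ht]
  · simpa using hpq
  · simp only [pathLen, List.map_append, List.map_replicate, stepCost, hs, ht, ↓reduceIte,
      List.replicate_append_replicate, List.sum_replicate, nsmul_eq_mul, Nat.cast_add]
    ring

lemma linear_le_pathLen {u v : ℝ} (huv : ∀ s, IsStep s → u * s.1 + v * s.2 ≤ stepCost s)
    {l : List (ℤ × ℤ)} (hl : ∀ s ∈ l, IsStep s) : u * l.sum.1 + v * l.sum.2 ≤ pathLen l := by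
  induction l with
  | nil => simp [pathLen]
  | cons s l ih =>
    have hs := huv s (hl s List.mem_cons_self)
    have hl' := ih fun x hx => hl x (List.mem_cons_of_mem s hx)
    simp only [pathLen, List.sum_cons, List.map_cons, Prod.fst_add, Prod.snd_add,
      Int.cast_add] at hl' ⊢
    linarith

lemma linear_le_latticeDist {u v : ℝ} (huv : ∀ s, IsStep s → u * s.1 + v * s.2 ≤ stepCost s)
    (p q : ℤ × ℤ) : u * (q.1 - p.1) + v * (q.2 - p.2) ≤ latticeDist p q := by
  refine le_csInf (pathLengths_nonempty p q) ?_
  rintro _ ⟨l, hl, rfl, rfl⟩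
  simpa using linear_le_pathLen huv hl

lemma latticeDist_lower_bounds (p q : ℤ × ℤ) :
    ((q.1 - p.1) + (q.2 - p.2) : ℝ) / 3 ≤ latticeDist p q ∧
      ((q.2 - p.2) - 2 * (q.1 - p.1) : ℝ) / 3 ≤ latticeDist p q ∧
      ((q.1 - p.1) - 2 * (q.2 - p.2) : ℝ) / 3 ≤ latticeDist p q := by
  refine ⟨?_, ?_, ?_⟩
  · convert linear_le_latticeDist (u := 1/3) (v := 1/3) ?_ p q using 1
    · ring
    · rw [forall_isStep]; norm_num [stepCost, fwdSteps]
  · convert linear_le_latticeDist (u := -2/3) (v := 1/3) ?_ p q using 1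
    · ring
    · rw [forall_isStep]; norm_num [stepCost, fwdSteps]
  · convert linear_le_latticeDist (u := 1/3) (v := -2/3) ?_ p q using 1
    · ring
    · rw [forall_isStep]; norm_num [stepCost, fwdSteps]

/-- for `A₁ = (0,a)`, `A₂ = (b,0)`, `A₃ = (0,c)` with `b ≥ 0` and
`c ≥ a ≥ 0`, the minimum of `d(A₁,X) + d(A₂,X) + d(A₃,X)` over all `X ∈ ℤ²` is attained
at some point `Y` on the union of the two nonnegative axes. -/
theorem tripod_min_on_axes (a b c : ℤ) (hb : 0 ≤ b) (ha : 0 ≤ a) (hca : a ≤ c) :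
    ∃ Y : ℤ × ℤ,
      ((∃ s : ℤ, 0 ≤ s ∧ Y = (s, 0)) ∨ (∃ s : ℤ, 0 ≤ s ∧ Y = (0, s))) ∧
      ∀ X : ℤ × ℤ,
        latticeDist (0, a) Y + latticeDist (b, 0) Y + latticeDist (0, c) Y ≤
          latticeDist (0, a) X + latticeDist (b, 0) X + latticeDist (0, c) X := by
  refine ⟨(0, a), Or.inr ⟨a, ha, rfl⟩, fun X => ?_⟩
  have hY₂ : latticeDist (b, 0) (0, a) ≤ (a + 2 * b) / 3 := by
    lift b to ℕ using hb
    lift a to ℕ using ha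
    have := latticeDist_le_of_fwdSteps (p := (b, 0)) (q := (0, a)) (s := (-1, -1)) (t := (0, 1))
      (by decide) (by decide) b (a + b) (by ext <;> simp)
    push_cast at this ⊢
    linarith
  have hY₃ : latticeDist (0, c) (0, a) ≤ 2 * (c - a) / 3 := by
    obtain ⟨k, rfl⟩ : ∃ k : ℕ, c = a + k := ⟨(c - a).toNat, by omega⟩
    have := latticeDist_le_of_fwdSteps (p := (0, a + k)) (q := (0, a)) (s := (1, 0))
      (t := (-1, -1)) (by decide) (by decide) k k (by ext <;> simp)
    push_cast at this ⊢
    linarith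
  obtain ⟨hX₁, -, -⟩ := latticeDist_lower_bounds (0, a) X
  obtain ⟨-, hX₂, -⟩ := latticeDist_lower_bounds (b, 0) X
  obtain ⟨-, -, hX₃⟩ := latticeDist_lower_bounds (0, c) X
  simp only [Int.cast_zero, sub_zero] at hX₁ hX₂ hX₃
  rw [latticeDist_self]
  linarith
end

section
/- Let A1 = (a,0), A2 = (b,0), A3 = (c,0) with c ≤ a ≤ b be three points on the x-axis in the lattice graph Γ. Then the minimum over X ∈ Z^2 of d(A1,X) + d(A2,X) + d(A3,X) is attained at some point Y on the x-axis. -/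
/-!
For `v = (x, y)` put `latticeGauge v = max (x + y) (y - 2x) (x - 2y)`. Every step `s` raises the
gauge by at most `3 · stepCost s`, so `d(A, X) ≥ latticeGauge (X - A) / 3`. For `X = (x, y)`,
bounding the three gauges below by `x - a - 2y`, `2(b - x) + y` and `x - c + y` shows that the total
distance from `A₁, A₂, A₃` to any `X` is at least `(2b - a - c)/3`. The point `Y = A₁` attains this
bound along the x-axis: `b - a` backward steps from `A₂` and `a - c` forward steps from `A₃`.
-/

def latticeGauge (v : ℤ × ℤ) : ℤ := max (v.1 + v.2) (max (v.2 - 2 * v.1) (v.1 - 2 * v.2))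

lemma IsStep.neg {s : ℤ × ℤ} (hs : IsStep s) : IsStep (-s) := by
  rw [IsStep, neg_neg]; exact hs.symm

lemma latticeGauge_add_le {s : ℤ × ℤ} (hs : IsStep s) (v : ℤ × ℤ) :
    (latticeGauge (v + s) : ℝ) ≤ latticeGauge v + 3 * stepCost s := by
  rcases hs with h | h <;>
    simp only [fwdSteps, List.mem_cons, List.not_mem_nil, or_false, neg_eq_iff_eq_neg] at h <;>
    rcases h with rfl | rfl | rfl <;>
    norm_num [stepCost, fwdSteps, latticeGauge] <;>
    norm_cast <;> omega

lemma latticeGauge_sum_le_pathLen {l : List (ℤ × ℤ)} (hl : ∀ s ∈ l, IsStep s) :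
    (latticeGauge l.sum : ℝ) / 3 ≤ pathLen l := by
  induction l with
  | nil => simp [pathLen, latticeGauge]
  | cons s t ih =>
    have ht := ih fun x hx ↦ hl x (List.mem_cons_of_mem _ hx)
    have hs := latticeGauge_add_le (hl s List.mem_cons_self) t.sum
    rw [List.sum_cons, add_comm s]
    simp only [pathLen, List.map_cons, List.sum_cons] at ht ⊢
    linarith

lemma bddBelow_pathLengths (a b : ℤ × ℤ) : BddBelow (pathLengths a b) :=
  ⟨0, by rintro r ⟨l, -, -, rfl⟩; exact pathLen_nonneg l⟩

lemma latticeDist_le {a b : ℤ × ℤ} {r : ℝ} (h : r ∈ pathLengths a b) :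
    latticeDist a b ≤ r :=
  csInf_le (bddBelow_pathLengths a b) h

lemma add_mem_pathLengths {a b c : ℤ × ℤ} {r r' : ℝ} (h : r ∈ pathLengths a b)
    (h' : r' ∈ pathLengths b c) : r + r' ∈ pathLengths a c := by
  obtain ⟨l, hl, rfl, rfl⟩ := h
  obtain ⟨l', hl', rfl, rfl⟩ := h'
  refine ⟨l ++ l', fun s hs ↦ ?_, by rw [List.sum_append, add_assoc], by simp [pathLen]⟩
  exact (List.mem_append.1 hs).elim (hl s) (hl' s)

lemma nsmul_mem_pathLengths {s : ℤ × ℤ} (hs : IsStep s) (p : ℤ × ℤ) (n : ℕ) :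
    n * stepCost s ∈ pathLengths p (p + n • s) :=
  ⟨List.replicate n s, fun _ h ↦ List.eq_of_mem_replicate h ▸ hs, by simp,
    by simp [pathLen, List.sum_replicate]⟩

lemma pathLengths_zsmul_nonempty {s : ℤ × ℤ} (hs : IsStep s) (p : ℤ × ℤ) (n : ℤ) :
    (pathLengths p (p + n • s)).Nonempty := by
  obtain ⟨m, rfl | rfl⟩ := Int.eq_nat_or_neg n
  · exact ⟨_, by simpa using nsmul_mem_pathLengths hs p m⟩
  · exact ⟨_, by simpa using nsmul_mem_pathLengths hs.neg p m⟩

lemma pathLengths_nonempty_s10 (a b : ℤ × ℤ) : (pathLengths a b).Nonempty := by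
  have hx : IsStep (1, 0) := Or.inl (by simp [fwdSteps])
  have hy : IsStep (0, 1) := Or.inl (by simp [fwdSteps])
  obtain ⟨r, hr⟩ := pathLengths_zsmul_nonempty hx a (b - a).1
  obtain ⟨r', hr'⟩ := pathLengths_zsmul_nonempty hy (a + (b - a).1 • (1, 0)) (b - a).2
  have hb : a + (b - a).1 • ((1 : ℤ), (0 : ℤ)) + (b - a).2 • ((0 : ℤ), (1 : ℤ)) = b := by
    ext <;> simp
  exact ⟨_, hb ▸ add_mem_pathLengths hr hr'⟩

lemma latticeGauge_sub_div_three_le_latticeDist (a b : ℤ × ℤ) :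
    (latticeGauge (b - a) : ℝ) / 3 ≤ latticeDist a b := by
  refine le_csInf (pathLengths_nonempty_s10 a b) ?_
  rintro r ⟨l, hl, rfl, rfl⟩
  simpa using latticeGauge_sum_le_pathLen hl

lemma latticeDist_rightward_le {x y : ℤ} (h : x ≤ y) (z : ℤ) :
    latticeDist (x, z) (y, z) ≤ (y - x) / 3 := by
  obtain ⟨n, rfl⟩ := Int.le.dest h
  have := latticeDist_le
    (nsmul_mem_pathLengths (s := (1, 0)) (Or.inl (by simp [fwdSteps])) (x, z) n)
  norm_num [stepCost, fwdSteps] at this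
  push_cast
  linarith

lemma latticeDist_leftward_le {x y : ℤ} (h : x ≤ y) (z : ℤ) :
    latticeDist (y, z) (x, z) ≤ 2 * (y - x) / 3 := by
  obtain ⟨n, rfl⟩ := Int.le.dest h
  have := latticeDist_le (nsmul_mem_pathLengths (s := (-1, 0)) (Or.inr (by simp [fwdSteps]))
    (x + n, z) n)
  norm_num [stepCost, fwdSteps] at this
  push_cast
  linarith

lemma sum_latticeDist_ge (a b c : ℤ) (X : ℤ × ℤ) :
    (2 * b - a - c : ℝ) / 3 ≤
      latticeDist (a, 0) X + latticeDist (b, 0) X + latticeDist (c, 0) X := by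
  have h₁ := latticeGauge_sub_div_three_le_latticeDist (a, 0) X
  have h₂ := latticeGauge_sub_div_three_le_latticeDist (b, 0) X
  have h₃ := latticeGauge_sub_div_three_le_latticeDist (c, 0) X
  have key : 2 * b - a - c ≤
      latticeGauge (X - (a, 0)) + latticeGauge (X - (b, 0)) + latticeGauge (X - (c, 0)) := by
    simp only [latticeGauge, Prod.fst_sub, Prod.snd_sub]
    omega
  have keyR := Int.cast_le (R := ℝ) |>.2 key
  push_cast at keyR
  linarith

/-- for `A₁ = (a,0)`, `A₂ = (b,0)`, `A₃ = (c,0)` with `c ≤ a ≤ b`, the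
minimum of `d(A₁,X) + d(A₂,X) + d(A₃,X)` over `X ∈ ℤ²` is attained at a point `Y` on
the x-axis. -/
theorem tripod_min_on_x_axis (a b c : ℤ) (hca : c ≤ a) (hab : a ≤ b) :
    ∃ y : ℤ, ∀ X : ℤ × ℤ,
      latticeDist (a, 0) (y, 0) + latticeDist (b, 0) (y, 0) + latticeDist (c, 0) (y, 0) ≤
        latticeDist (a, 0) X + latticeDist (b, 0) X + latticeDist (c, 0) X := by
  refine ⟨a, fun X ↦ ?_⟩
  have h₁ := latticeDist_rightward_le (le_refl a) 0
  have h₂ := latticeDist_leftward_le hab 0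
  have h₃ := latticeDist_rightward_le hca 0
  have := sum_latticeDist_ge a b c X
  simp only [sub_self, zero_div] at h₁
  linarith
end
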